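/- Orthogonal cancellation for approximate unitary equivalence: in a finite factor with trace τ, if A₁ ~ A₂, A₁ ⊥ B₁, and A₂ ⊥ B₂ (all self-adjoint), then B₁ ~ B₂ if and only if A₁ + B₁ ~ A₂ + B₂. -/
import Mathlib


open Filter MeasureTheory

/-- Approximate unitary equivalence in a unital C*-algebra. -/
def ApproxUnitaryEquiv {M : Type*} [CStarAlgebra M] (a b : M) : Prop :=
  ∃ U : ℕ → unitary M,
    Tendsto (fun n => ‖(U n : M) * a * star (U n : M) - b‖) atTop (nhds 0)

lemma pow_add_of_orth {M : Type*} [Ring M] (A B : M)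
    (h : A * B = 0) (h' : B * A = 0) :
    ∀ k : ℕ, 0 < k → (A + B) ^ k = A ^ k + B ^ k := by
  have hAB : ∀ m : ℕ, 0 < m → A ^ m * B = 0 := by
    rintro ⟨_, m⟩ hm
    · omega
    · rw [pow_succ, mul_assoc, h, mul_zero]
  have hBA : ∀ m : ℕ, 0 < m → B ^ m * A = 0 := by
    rintro ⟨_, m⟩ hm
    · omega
    · rw [pow_succ, mul_assoc, h', mul_zero]
  intro k hk
  induction k with
  | zero => omega
  | succ n ih =>
    rcases Nat.eq_zero_or_pos n with hn | hn
    · subst hn; simp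
    · rw [pow_succ, ih hn, add_mul, mul_add, mul_add,
        hAB n hn, hBA n hn, ← pow_succ, ← pow_succ]
      abel

/-- Orthogonal cancellation: if A₁ ~ A₂, A₁ ⊥ B₁ and A₂ ⊥ B₂ (all self-adjoint)
in a finite factor with trace τ, then B₁ ~ B₂ ⟺ A₁ + B₁ ~ A₂ + B₂.  (As granted
in the context, for self-adjoint elements ~ is equivalent to equality of all
moments with respect to τ.) -/
theorem approxUnitaryEquiv_add_iff {M : Type*} [CStarAlgebra M]
    (τ : M →ₗ[ℂ] ℂ) (hτcont : Continuous τ) (hτ1 : τ 1 = 1)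
    (hτtrace : ∀ x y : M, τ (x * y) = τ (y * x))
    (hτpos : ∀ x : M, 0 ≤ (τ (star x * x)).re ∧ (τ (star x * x)).im = 0)
    (hτfaithful : ∀ x : M, τ (star x * x) = 0 → x = 0)
    (hmom : ∀ X Y : M, IsSelfAdjoint X → IsSelfAdjoint Y →
      (ApproxUnitaryEquiv X Y ↔ ∀ k : ℕ, 0 < k → τ (X ^ k) = τ (Y ^ k)))
    (A₁ A₂ B₁ B₂ : M)
    (hA₁ : IsSelfAdjoint A₁) (hA₂ : IsSelfAdjoint A₂)
    (hB₁ : IsSelfAdjoint B₁) (hB₂ : IsSelfAdjoint B₂)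
    (hA : ApproxUnitaryEquiv A₁ A₂)
    (h₁ : A₁ * B₁ = 0) (h₁' : B₁ * A₁ = 0)
    (h₂ : A₂ * B₂ = 0) (h₂' : B₂ * A₂ = 0) :
    ApproxUnitaryEquiv B₁ B₂ ↔ ApproxUnitaryEquiv (A₁ + B₁) (A₂ + B₂) := by
  have hAmom := (hmom A₁ A₂ hA₁ hA₂).mp hA
  rw [hmom B₁ B₂ hB₁ hB₂, hmom (A₁ + B₁) (A₂ + B₂) (hA₁.add hB₁) (hA₂.add hB₂)]
  constructor
  · intro hB k hk
    rw [pow_add_of_orth A₁ B₁ h₁ h₁' k hk, pow_add_of_orth A₂ B₂ h₂ h₂' k hk,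
      map_add, map_add, hAmom k hk, hB k hk]
  · intro hS k hk
    have := hS k hk
    rw [pow_add_of_orth A₁ B₁ h₁ h₁' k hk, pow_add_of_orth A₂ B₂ h₂ h₂' k hk,
      map_add, map_add, hAmom k hk] at this
    exact add_left_cancel this
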